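/- arXiv:2605.22782 — 3 statements merged into one kernel-verified Lean document; each statement's English description precedes it below -/
import Mathlib

section
/- Let R be a noetherian ring, S a noetherian flat R-algebra, and M a finite R-module. If M is a reflexive R-module (the natural double-dual map M → Hom_R(Hom_R(M,R),R) is an isomorphism), then S ⊗_R M is a reflexive S-module. -/
/-!
For a finitely presented `R`-module `N` and a flat `R`-algebra `S`, taking duals commutes with
base change: `S ⊗[R] N* ≅ (S ⊗[R] N)*` (`Module.FinitePresentation.isBaseChange_map`, which
dualises a finite presentation of `N` and uses that `S` preserves the resulting left exact
sequence). Consequently the base change of a perfect pairing between finitely presented modules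
is again perfect. A module `M` is reflexive exactly when the evaluation pairing `M × M* → R` is
perfect, and over a noetherian ring both `M` and `M*` are finitely presented.
-/

open TensorProduct Module

namespace Module.Dual

variable (R S N : Type*) [CommRing R] [CommRing S] [Algebra R S] [AddCommGroup N] [Module R N]

noncomputable def baseChangeHom : Dual R N →ₗ[R] Dual S (S ⊗[R] N) :=
  (LinearEquiv.congrRight (AlgebraTensorModule.rid R S S)).toLinearMap.restrictScalars R ∘ₗ
    LinearMap.baseChangeHom R S N R

variable {R S N} in
@[simp]
lemma baseChangeHom_apply_tmul (f : Dual R N) (s : S) (n : N) :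
    baseChangeHom R S N f (s ⊗ₜ n) = f n • s := by
  simp [baseChangeHom, LinearEquiv.congrRight]

variable [Module.Flat R S] [Module.FinitePresentation R N]

lemma isBaseChange_baseChangeHom : IsBaseChange S (baseChangeHom R S N) :=
  (FinitePresentation.isBaseChange_map R N R S).comp (IsBaseChange.ofEquiv _)

lemma bijective_liftBaseChange_baseChangeHom :
    Function.Bijective ((baseChangeHom R S N).liftBaseChange S) := by
  have h := isBaseChange_baseChangeHom R S N
  have : h.equiv.toLinearMap = (baseChangeHom R S N).liftBaseChange S := by
    ext n
    simp [IsBaseChange.equiv_tmul]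
  exact this ▸ h.equiv.bijective

end Module.Dual

namespace LinearMap

variable {R : Type*} (S : Type*) {M N : Type*} [CommRing R] [CommRing S] [Algebra R S]
  [AddCommGroup M] [Module R M] [AddCommGroup N] [Module R N]

lemma baseChange_bijective {f : M →ₗ[R] N} (hf : Function.Bijective f) :
    Function.Bijective (f.baseChange S) :=
  ((LinearEquiv.ofBijective f hf).baseChange R S M N).bijective

noncomputable def pairingBaseChange (p : M →ₗ[R] N →ₗ[R] R) :
    S ⊗[R] M →ₗ[S] S ⊗[R] N →ₗ[S] S :=
  (Dual.baseChangeHom R S N).liftBaseChange S ∘ₗ p.baseChange S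

variable {S}

@[simp]
lemma pairingBaseChange_tmul (p : M →ₗ[R] N →ₗ[R] R) (s t : S) (m : M) (n : N) :
    p.pairingBaseChange S (s ⊗ₜ m) (t ⊗ₜ n) = p m n • (s * t) := by
  simp [pairingBaseChange]

lemma flip_pairingBaseChange (p : M →ₗ[R] N →ₗ[R] R) :
    (p.pairingBaseChange S).flip = p.flip.pairingBaseChange S := by
  ext n m
  simp

instance IsPerfPair.pairingBaseChange [Module.Flat R S] [Module.FinitePresentation R M]
    [Module.FinitePresentation R N] (p : M →ₗ[R] N →ₗ[R] R) [p.IsPerfPair] :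
    (p.pairingBaseChange S).IsPerfPair where
  bijective_left :=
    (Dual.bijective_liftBaseChange_baseChangeHom R S N).comp
      (baseChange_bijective S (IsPerfPair.bijective_left p))
  bijective_right := by
    rw [flip_pairingBaseChange]
    exact (Dual.bijective_liftBaseChange_baseChangeHom R S M).comp
      (baseChange_bijective S (IsPerfPair.bijective_right p))

end LinearMap

theorem flat_baseChange_reflexive_general
    (R S M : Type*) [CommRing R] [IsNoetherianRing R]
    [CommRing S] [Algebra R S] [Module.Flat R S]
    [AddCommGroup M] [Module R M] [Module.Finite R M]
    [Module.IsReflexive R M] :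
    Module.IsReflexive S (S ⊗[R] M) := by
  have : Module.Finite R (Dual R M) := IsNoetherian.finite R (Dual R M)
  have : Module.FinitePresentation R M := finitePresentation_of_finite R M
  have : Module.FinitePresentation R (Dual R M) := finitePresentation_of_finite R (Dual R M)
  exact .of_isPerfPair ((Dual.eval R M).pairingBaseChange S)

/-- Flat base change preserves reflexivity: if `R` is noetherian, `S` a noetherian flat
`R`-algebra, and `M` a finite reflexive `R`-module, then `S ⊗[R] M` is a reflexive
`S`-module. -/
theorem flat_baseChange_reflexive
    (R S M : Type*) [CommRing R] [IsNoetherianRing R]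
    [CommRing S] [Algebra R S] [IsNoetherianRing S] [Module.Flat R S]
    [AddCommGroup M] [Module R M] [Module.Finite R M]
    [Module.IsReflexive R M] :
    Module.IsReflexive S (S ⊗[R] M) :=
  flat_baseChange_reflexive_general R S M
end

section
/- Let R → S be a faithfully flat local homomorphism of noetherian local rings and let M be a finite R-module. If S ⊗_R M is a free S-module of rank one, then M is a free R-module of rank one. -/
open TensorProduct

/-- Faithfully flat local base change detects freeness of rank one: if `R → S` is a
faithfully flat local homomorphism of noetherian local rings and `M` is a finite
`R`-module such that `S ⊗[R] M` is free of rank one over `S`, then `M` is free of rank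
one over `R`. -/
theorem faithfully_flat_detects_free_rank_one
    (R S M : Type*) [CommRing R] [IsLocalRing R] [IsNoetherianRing R]
    [CommRing S] [IsLocalRing S] [IsNoetherianRing S] [Algebra R S]
    [IsLocalHom (algebraMap R S)] [Module.FaithfullyFlat R S]
    [AddCommGroup M] [Module R M] [Module.Finite R M]
    (h : Nonempty ((S ⊗[R] M) ≃ₗ[S] S)) :
    Nonempty (M ≃ₗ[R] R) := by
  obtain ⟨e⟩ := h
  set k := IsLocalRing.ResidueField R
  set kS := IsLocalRing.ResidueField S
  haveI : IsScalarTower R S kS := IsScalarTower.of_algebraMap_eq fun r =>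
    (IsLocalRing.ResidueField.map_residue (algebraMap R S) r).symm ▸
      (IsLocalRing.ResidueField.map_residue (algebraMap R S) r)
  -- Step 1: finrank k (k ⊗ M) = 1
  have hfr : Module.finrank k (k ⊗[R] M) = 1 := by
    have e1 : kS ⊗[k] (k ⊗[R] M) ≃ₗ[kS] kS ⊗[R] M :=
      AlgebraTensorModule.cancelBaseChange R k kS kS M
    have e2 : kS ⊗[S] (S ⊗[R] M) ≃ₗ[kS] kS ⊗[R] M :=
      AlgebraTensorModule.cancelBaseChange R S kS kS M
    have e3 : kS ⊗[S] (S ⊗[R] M) ≃ₗ[kS] kS ⊗[S] S := e.baseChange S kS _ _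
    calc Module.finrank k (k ⊗[R] M)
        = Module.finrank kS (kS ⊗[k] (k ⊗[R] M)) := (Module.finrank_baseChange).symm
      _ = Module.finrank kS (kS ⊗[R] M) := e1.finrank_eq
      _ = Module.finrank kS (kS ⊗[S] (S ⊗[R] M)) := e2.symm.finrank_eq
      _ = Module.finrank kS (kS ⊗[S] S) := e3.finrank_eq
      _ = Module.finrank S S := Module.finrank_baseChange
      _ = 1 := Module.finrank_self S
  -- Step 2: get a generator x of M
  haveI : Nontrivial (k ⊗[R] M) := Module.nontrivial_of_finrank_pos (by omega : 0 < Module.finrank k (k ⊗[R] M))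
  obtain ⟨v, hv⟩ := exists_ne (0 : k ⊗[R] M)
  obtain ⟨x, hx⟩ := TensorProduct.mk_surjective R M k Ideal.Quotient.mk_surjective v
  let b : Module.Basis Unit k (k ⊗[R] M) := FiniteDimensional.basisSingleton Unit hfr v hv
  have hspan : Submodule.span R (Set.range fun _ : Unit => x) = ⊤ :=
    IsLocalRing.span_eq_top_of_tmul_eq_basis (R := R) (f := fun _ => x) b
      (fun i => by simpa [b, FiniteDimensional.basisSingleton_apply] using hx)
  let f : R →ₗ[R] M := LinearMap.toSpanSingleton R M x
  have hfsurj : Function.Surjective f := by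
    rw [← LinearMap.range_eq_top, ← LinearMap.span_singleton_eq_range, ← Set.range_const (ι := Unit)]
    exact hspan
  -- Step 3: base change of f is bijective
  have hbsurj : Function.Surjective (f.baseChange S) := by
    rw [LinearMap.baseChange_eq_ltensor]
    exact LinearMap.lTensor_surjective S hfsurj
  let g : (S ⊗[R] R) →ₗ[S] (S ⊗[R] R) :=
    ((AlgebraTensorModule.rid R S S).symm.toLinearMap ∘ₗ e.toLinearMap) ∘ₗ f.baseChange S
  have hgsurj : Function.Surjective g := by
    simp only [g, LinearMap.coe_comp]
    exact (((AlgebraTensorModule.rid R S S).symm.surjective.comp e.surjective).comp hbsurj)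
  have hginj : Function.Injective g :=
    OrzechProperty.injective_of_surjective_endomorphism g hgsurj
  have hbinj : Function.Injective (f.baseChange S) := by
    intro a b hab
    apply hginj
    simp only [g, LinearMap.comp_apply, hab]
  -- Step 4: f injective via faithful flatness
  have hlinj : Function.Injective (LinearMap.lTensor S f) := by
    have hb : (f.baseChange S : S ⊗[R] R → S ⊗[R] M) = LinearMap.lTensor S f := by
      rw [LinearMap.baseChange_eq_ltensor]
    rw [← hb]
    exact hbinj
  have hfinj : Function.Injective f := by
    rw [← LinearMap.ker_eq_bot, eq_bot_iff]
    have hcomp : LinearMap.lTensor S f ∘ₗ LinearMap.lTensor S ((LinearMap.ker f).subtype) = 0 := by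
      rw [← LinearMap.lTensor_comp]
      have : f ∘ₗ (LinearMap.ker f).subtype = 0 := by ext y; exact LinearMap.mem_ker.mp y.2
      rw [this, LinearMap.lTensor_zero]
    have hz : LinearMap.lTensor S ((LinearMap.ker f).subtype) = 0 := by
      apply LinearMap.ext; intro z
      apply hlinj
      have := congrFun (congrArg (fun (l : S ⊗[R] LinearMap.ker f →ₗ[R] S ⊗[R] M) => (l : _ → _)) hcomp) z
      simpa using this
    have h0 := (Module.FaithfullyFlat.zero_iff_lTensor_zero R S ((LinearMap.ker f).subtype)).mpr hz
    intro y hy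
    have := congrFun (congrArg (fun (l : LinearMap.ker f →ₗ[R] R) => (l : LinearMap.ker f → R)) h0) ⟨y, hy⟩
    simpa using this
  exact ⟨(LinearEquiv.ofBijective f ⟨hfinj, hfsurj⟩).symm⟩
end

section
/- Let K be a field, L an algebraic field extension of K, and A a finitely generated K-algebra. Let q be a prime of L ⊗_K A lying over a prime p of A. Then the fiber ring (L ⊗_K A)_q ⊗_{A_p} κ(p) has Krull dimension 0; consequently dim (L ⊗_K A)_q = dim A_p. -/
set_option maxHeartbeats 1000000

open TensorProduct

section Aux

variable {A B : Type*} [CommRing A] [CommRing B] [Algebra A B]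

/-- Incomparability: comap is strictly monotone on primes for integral extensions. -/
lemma aux_comap_lt_comap (hint : ∀ x : B, IsIntegral A x)
    {P₁ P₂ : Ideal B} [P₁.IsPrime] (h : P₁ < P₂) :
    P₁.comap (algebraMap A B) < P₂.comap (algebraMap A B) := by
  obtain ⟨x, hx₂, hx₁⟩ := SetLike.exists_of_lt h
  exact Ideal.comap_lt_comap_of_integral_mem_sdiff h.le ⟨hx₂, hx₁⟩ (hint x)

/-- Going-down for flat algebras. -/
lemma aux_going_down [Module.Flat A B] (p₀ p₁ : Ideal A) [p₀.IsPrime] [p₁.IsPrime]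
    (h01 : p₀ ≤ p₁) (P₁ : Ideal B) [P₁.IsPrime] (hP₁ : P₁.comap (algebraMap A B) = p₁) :
    ∃ P₀ : Ideal B, P₀.IsPrime ∧ P₀ ≤ P₁ ∧ P₀.comap (algebraMap A B) = p₀ := by
  let B' := Localization.AtPrime P₁
  haveI : Module.Flat B B' := IsLocalization.flat B' P₁.primeCompl
  haveI : Module.Flat A B' := Module.Flat.trans A B B'
  have hmapP : p₀.map (algebraMap A B') ≤ IsLocalRing.maximalIdeal B' := by
    rw [IsScalarTower.algebraMap_eq A B B', ← Ideal.map_map]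
    refine le_trans (Ideal.map_mono ?_) (le_of_eq Localization.AtPrime.map_eq_maximalIdeal)
    exact Ideal.map_le_iff_le_comap.mpr (fun a ha => hP₁ ▸ (h01 ha))
  have hne : p₀.map (algebraMap A B') ≠ ⊤ := fun h =>
    (IsLocalRing.maximalIdeal.isMaximal B').ne_top (top_le_iff.mp (h ▸ hmapP))
  have hsm : ∀ r : A, (r : A) • (Ideal.Quotient.mk p₀ 1) = Ideal.Quotient.mk p₀ r := by
    intro r
    rw [show (r : A) • (Ideal.Quotient.mk p₀ 1) = Ideal.Quotient.mk p₀ (r * 1) from rfl, mul_one]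
  have key : (p₀.map (algebraMap A B')).comap (algebraMap A B') ≤ p₀ := by
    intro a ha
    by_contra ha0
    have hinj : Function.Injective (LinearMap.lsmul A (A ⧸ p₀) a) := by
      intro x y hxy
      obtain ⟨x, rfl⟩ := Ideal.Quotient.mk_surjective x
      obtain ⟨y, rfl⟩ := Ideal.Quotient.mk_surjective y
      simp only [LinearMap.lsmul_apply] at hxy
      have hx : (a : A) • (Ideal.Quotient.mk p₀ x) = Ideal.Quotient.mk p₀ (a * x) := rfl
      have hy : (a : A) • (Ideal.Quotient.mk p₀ y) = Ideal.Quotient.mk p₀ (a * y) := rfl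
      rw [hx, hy, Ideal.Quotient.eq] at hxy
      rw [Ideal.Quotient.eq]
      have : a * (x - y) ∈ p₀ := by rwa [mul_sub]
      exact (‹p₀.IsPrime›.mem_or_mem this).resolve_left ha0
    have hψ := Module.Flat.rTensor_preserves_injective_linearMap (M := B')
      (LinearMap.lsmul A (A ⧸ p₀) a) hinj
    set e := TensorProduct.quotTensorEquivQuotSMul B' p₀ with he
    set t : (A ⧸ p₀) ⊗[A] B' := Ideal.Quotient.mk p₀ 1 ⊗ₜ[A] (1 : B') with ht
    have h1 : (LinearMap.lsmul A (A ⧸ p₀) a).rTensor B' t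
        = (Ideal.Quotient.mk p₀ a) ⊗ₜ[A] (1 : B') := by
      rw [ht, LinearMap.rTensor_tmul, LinearMap.lsmul_apply, hsm]
    have hmem : (a : A) • (1 : B') ∈ p₀ • (⊤ : Submodule A B') := by
      rw [Ideal.smul_top_eq_map, Submodule.restrictScalars_mem]
      rw [Algebra.smul_def, mul_one]
      exact ha
    have h2 : e ((Ideal.Quotient.mk p₀ a) ⊗ₜ[A] (1 : B')) = 0 := by
      rw [he, TensorProduct.quotTensorEquivQuotSMul_mk_tmul, Submodule.Quotient.mk_eq_zero]
      exact hmem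
    have ht0 : t = 0 := by
      apply hψ
      rw [h1, LinearMap.map_zero]
      exact e.map_eq_zero_iff.mp h2
    have h5 : e t = 0 := e.map_eq_zero_iff.mpr ht0
    rw [ht, he, TensorProduct.quotTensorEquivQuotSMul_mk_tmul, one_smul,
      Submodule.Quotient.mk_eq_zero, Ideal.smul_top_eq_map, Submodule.restrictScalars_mem] at h5
    exact hne ((Ideal.eq_top_iff_one _).mpr h5)
  obtain ⟨Q, hQge, hQprime, hQle⟩ :=
    Ideal.exists_ideal_comap_le_prime p₀ (p₀.map (algebraMap A B')) key
  haveI := hQprime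
  have hQcomap : Q.comap (algebraMap A B') = p₀ :=
    le_antisymm hQle (Ideal.map_le_iff_le_comap.mp hQge)
  refine ⟨Q.comap (algebraMap B B'), Ideal.comap_isPrime _ _, ?_, ?_⟩
  · have hd := ((IsLocalization.isPrime_iff_isPrime_disjoint P₁.primeCompl B' Q).mp hQprime).2
    intro x hx
    by_contra hxP
    exact Set.disjoint_left.mp hd hxP hx
  · rw [Ideal.comap_comap, ← IsScalarTower.algebraMap_eq A B B', hQcomap]

/-- Lifting chains of primes downward using going-down. -/
lemma aux_lift_chain [Module.Flat A B] :
    ∀ (n : ℕ) (c : LTSeries (PrimeSpectrum A)), c.length = n →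
      ∀ (P : PrimeSpectrum B), P.asIdeal.comap (algebraMap A B) = c.last.asIdeal →
      ∃ c' : LTSeries (PrimeSpectrum B), c'.length = n ∧ c'.last = P := by
  intro n
  induction n with
  | zero => exact fun c hc P hP => ⟨RelSeries.singleton _ P, rfl, rfl⟩
  | succ n ih =>
    intro c hc P hP
    have hlen : c.length ≠ 0 := by omega
    have hlt : c.eraseLast.last < c.last := c.eraseLast_last_rel_last hlen
    have hltI : c.eraseLast.last.asIdeal < c.last.asIdeal := hlt
    obtain ⟨P₀, hP₀prime, hP₀le, hP₀comap⟩ :=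
      aux_going_down c.eraseLast.last.asIdeal c.last.asIdeal hltI.le P.asIdeal hP
    haveI := hP₀prime
    have hP₀lt : (⟨P₀, hP₀prime⟩ : PrimeSpectrum B) < P := by
      refine lt_of_le_of_ne hP₀le fun hEq => ?_
      apply hltI.ne
      rw [← hP₀comap, ← hP]
      exact congrArg (fun I : Ideal B => I.comap (algebraMap A B))
        (congrArg PrimeSpectrum.asIdeal hEq)
    obtain ⟨c₀, hc₀len, hc₀last⟩ := ih c.eraseLast (by
        have : c.eraseLast.length = c.length - 1 := rfl
        omega) ⟨P₀, hP₀prime⟩ hP₀comap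
    refine ⟨c₀.snoc P (hc₀last ▸ hP₀lt), ?_, RelSeries.last_snoc _ _ _⟩
    have : (c₀.snoc P (hc₀last ▸ hP₀lt)).length = c₀.length + 0 + 1 := rfl
    omega

/-- comap from the localization at a prime is strictly monotone on primes. -/
lemma aux_loc_strictmono {R : Type*} [CommRing R] (p : Ideal R) [p.IsPrime]
    {J₁ J₂ : Ideal (Localization.AtPrime p)} (h : J₁ < J₂) :
    J₁.comap (algebraMap R (Localization.AtPrime p))
      < J₂.comap (algebraMap R (Localization.AtPrime p)) := by
  refine lt_of_le_of_ne (Ideal.comap_mono h.le) fun heq => h.ne ?_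
  rw [← IsLocalization.map_comap p.primeCompl (Localization.AtPrime p) J₁,
    ← IsLocalization.map_comap p.primeCompl (Localization.AtPrime p) J₂]
  exact congrArg (Ideal.map _) heq

/-- comap from localization lands below the prime. -/
lemma aux_loc_comap_le {R : Type*} [CommRing R] (p : Ideal R) [p.IsPrime]
    (J : Ideal (Localization.AtPrime p)) [hJ : J.IsPrime] :
    J.comap (algebraMap R (Localization.AtPrime p)) ≤ p := by
  have hd := ((IsLocalization.isPrime_iff_isPrime_disjoint p.primeCompl
    (Localization.AtPrime p) J).mp hJ).2
  intro x hx
  by_contra hxp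
  exact Set.disjoint_left.mp hd hxp hx

lemma aux_loc_map_prime {R : Type*} [CommRing R] (p : Ideal R) [p.IsPrime] (I : Ideal R)
    (hI : I.IsPrime) (hle : I ≤ p) :
    (I.map (algebraMap R (Localization.AtPrime p))).IsPrime ∧
    (I.map (algebraMap R (Localization.AtPrime p))).comap
      (algebraMap R (Localization.AtPrime p)) = I := by
  have hd : Disjoint (p.primeCompl : Set R) (I : Set R) :=
    Set.disjoint_left.mpr fun x hx hxI => hx (hle hxI)
  exact ⟨IsLocalization.isPrime_of_isPrime_disjoint p.primeCompl _ I hI hd,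
    IsLocalization.comap_map_of_isPrime_disjoint p.primeCompl _ hI hd⟩

end Aux

/-- Let `K` be a field, `L/K` an algebraic field extension, and `A` a finitely generated
`K`-algebra. Let `q` be a prime of `L ⊗[K] A` lying over the prime `p` of `A`. Then the
closed fiber of `A_p → (L ⊗[K] A)_q` (presented as `(L ⊗[K] A)_q / p·(L ⊗[K] A)_q`) has
Krull dimension `0`; consequently `dim (L ⊗[K] A)_q = dim A_p`. -/
theorem fiber_dim_zero_and_dim_eq_of_algebraic_base_change
    (K L A : Type*) [Field K] [Field L] [Algebra K L] [Algebra.IsAlgebraic K L]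
    [CommRing A] [Algebra K A] [Algebra.FiniteType K A]
    (q : Ideal (L ⊗[K] A)) [q.IsPrime]
    (p : Ideal A) [p.IsPrime]
    (hp : p = q.comap (Algebra.TensorProduct.includeRight (R := K) (A := L) (B := A)).toRingHom) :
    ringKrullDim
        (Localization.AtPrime q ⧸
          Ideal.map
            ((algebraMap (L ⊗[K] A) (Localization.AtPrime q)).comp
              (Algebra.TensorProduct.includeRight (R := K) (A := L) (B := A)).toRingHom)
            p) = 0 ∧
      ringKrullDim (Localization.AtPrime q) = ringKrullDim (Localization.AtPrime p) := by
  classical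
  set f : A →+* L ⊗[K] A :=
    (Algebra.TensorProduct.includeRight (R := K) (A := L) (B := A)).toRingHom with hf
  letI : Algebra A (L ⊗[K] A) := f.toAlgebra
  have halg : algebraMap A (L ⊗[K] A) = f := rfl
  -- the `A`-algebra iso with `A ⊗[K] L`
  let e₀ : A ⊗[K] L ≃ₐ[K] L ⊗[K] A := Algebra.TensorProduct.comm K A L
  have hcomm : ∀ a : A, e₀ (algebraMap A (A ⊗[K] L) a) = algebraMap A (L ⊗[K] A) a := by
    intro a
    rw [halg, hf]
    simp [e₀, Algebra.TensorProduct.algebraMap_apply]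
  let e' : (A ⊗[K] L) ≃ₐ[A] (L ⊗[K] A) := AlgEquiv.ofRingEquiv (f := e₀.toRingEquiv) hcomm
  -- flatness
  haveI hflat : Module.Flat A (L ⊗[K] A) :=
    Module.Flat.of_linearEquiv e'.symm.toLinearEquiv
  -- integrality
  have hint : ∀ x : L ⊗[K] A, IsIntegral A x := by
    have key : ∀ y : A ⊗[K] L, IsIntegral A y := fun y => by
      induction y with
      | zero => exact isIntegral_zero
      | tmul a l => exact IsIntegral.tmul a (Algebra.IsAlgebraic.isAlgebraic l).isIntegral
      | add u v hu hv => exact hu.add hv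
    intro x
    have := (key (e'.symm x)).map e'.toAlgHom
    simpa using this
  have hpq : q.comap (algebraMap A (L ⊗[K] A)) = p := by rw [halg]; exact hp.symm
  -- notation
  set Bq := Localization.AtPrime q with hBq
  set g : A →+* Bq := (algebraMap (L ⊗[K] A) Bq).comp f with hg
  -- the extended ideal is proper
  have hJle : p.map g ≤ q.map (algebraMap (L ⊗[K] A) Bq) := by
    rw [Ideal.map_le_iff_le_comap]
    intro a ha
    have hfa : f a ∈ q := by rw [hp] at ha; exact ha
    exact Ideal.mem_map_of_mem _ hfa
  have hJtop : p.map g ≠ ⊤ := by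
    intro h
    have h2 : p.map g ≤ IsLocalRing.maximalIdeal Bq :=
      hJle.trans (le_of_eq Localization.AtPrime.map_eq_maximalIdeal)
    exact (IsLocalRing.maximalIdeal.isMaximal Bq).ne_top (top_le_iff.mp (h ▸ h2))
  haveI : Nontrivial (Bq ⧸ p.map g) := Ideal.Quotient.nontrivial_iff.mpr hJtop
  -- the fiber has no strict chains of primes
  have nochain : ∀ a b : PrimeSpectrum (Bq ⧸ p.map g), ¬ a < b := by
    intro a b hab
    have hab' : a.asIdeal < b.asIdeal := hab
    have hsurj : Function.Surjective (Ideal.Quotient.mk (p.map g)) :=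
      Ideal.Quotient.mk_surjective
    have h1 : a.asIdeal.comap (Ideal.Quotient.mk (p.map g))
        < b.asIdeal.comap (Ideal.Quotient.mk (p.map g)) := by
      refine lt_of_le_of_ne (Ideal.comap_mono hab'.le) fun heq => hab'.ne ?_
      rw [← Ideal.map_comap_of_surjective _ hsurj a.asIdeal, heq,
        Ideal.map_comap_of_surjective _ hsurj]
    haveI ha' : (a.asIdeal.comap (Ideal.Quotient.mk (p.map g))).IsPrime :=
      Ideal.comap_isPrime _ _
    haveI hb' : (b.asIdeal.comap (Ideal.Quotient.mk (p.map g))).IsPrime :=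
      Ideal.comap_isPrime _ _
    have h2 : (a.asIdeal.comap (Ideal.Quotient.mk (p.map g))).comap
          (algebraMap (L ⊗[K] A) Bq)
        < (b.asIdeal.comap (Ideal.Quotient.mk (p.map g))).comap
          (algebraMap (L ⊗[K] A) Bq) := aux_loc_strictmono q h1
    haveI hPa : ((a.asIdeal.comap (Ideal.Quotient.mk (p.map g))).comap
        (algebraMap (L ⊗[K] A) Bq)).IsPrime := Ideal.comap_isPrime _ _
    have h3 := aux_comap_lt_comap (A := A) hint h2
    -- but both comaps in A are equal to p
    have hcomapeq : ∀ (c : Ideal (Bq ⧸ p.map g)), c.IsPrime →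
        ((c.comap (Ideal.Quotient.mk (p.map g))).comap
          (algebraMap (L ⊗[K] A) Bq)).comap (algebraMap A (L ⊗[K] A)) = p := by
      intro c hc
      haveI := hc
      haveI : (c.comap (Ideal.Quotient.mk (p.map g))).IsPrime := Ideal.comap_isPrime _ _
      refine le_antisymm ?_ ?_
      · exact le_trans (Ideal.comap_mono (aux_loc_comap_le q _)) (le_of_eq hpq)
      · intro x hx
        have hgx : g x ∈ p.map g := Ideal.mem_map_of_mem _ hx
        have hker : p.map g ≤ c.comap (Ideal.Quotient.mk (p.map g)) :=
          le_trans (le_of_eq Ideal.mk_ker.symm) (Ideal.ker_le_comap _)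
        exact hker hgx
    have := h3.ne
    rw [hcomapeq _ a.isPrime, hcomapeq _ b.isPrime] at this
    exact this rfl
  constructor
  · -- fiber dimension is zero
    refine le_antisymm ?_ (ringKrullDim_nonneg_of_nontrivial)
    refine le_trans (Order.krullDim_le_of_strictMono (fun _ => (default : PUnit.{1}))
      (fun a b h => absurd h (nochain a b))) ?_
    rw [Order.krullDim_eq_zero_of_unique]
  · -- dimension equality
    refine le_antisymm ?_ ?_
    · -- dim B_q ≤ dim A_p
      have hFprime : ∀ J : PrimeSpectrum Bq,
          (((J.asIdeal.comap (algebraMap (L ⊗[K] A) Bq)).comap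
            (algebraMap A (L ⊗[K] A))).map
              (algebraMap A (Localization.AtPrime p))).IsPrime := by
        intro J
        haveI : (J.asIdeal.comap (algebraMap (L ⊗[K] A) Bq)).IsPrime :=
          Ideal.comap_isPrime _ _
        refine (aux_loc_map_prime p _ (Ideal.comap_isPrime _ _) ?_).1
        exact le_trans (Ideal.comap_mono (aux_loc_comap_le q _)) (le_of_eq hpq)
      refine Order.krullDim_le_of_strictMono
        (fun J : PrimeSpectrum Bq =>
          (⟨((J.asIdeal.comap (algebraMap (L ⊗[K] A) Bq)).comap
            (algebraMap A (L ⊗[K] A))).map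
              (algebraMap A (Localization.AtPrime p)), hFprime J⟩ :
            PrimeSpectrum (Localization.AtPrime p))) ?_
      intro J₁ J₂ hJ
      have hJ' : J₁.asIdeal < J₂.asIdeal := hJ
      have h1 := aux_loc_strictmono q hJ'
      haveI : (J₁.asIdeal.comap (algebraMap (L ⊗[K] A) Bq)).IsPrime :=
        Ideal.comap_isPrime _ _
      haveI : (J₂.asIdeal.comap (algebraMap (L ⊗[K] A) Bq)).IsPrime :=
        Ideal.comap_isPrime _ _
      have h2 := aux_comap_lt_comap (A := A) hint h1
      have hle₁ : (J₁.asIdeal.comap (algebraMap (L ⊗[K] A) Bq)).comap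
          (algebraMap A (L ⊗[K] A)) ≤ p :=
        le_trans (Ideal.comap_mono (aux_loc_comap_le q _)) (le_of_eq hpq)
      have hle₂ : (J₂.asIdeal.comap (algebraMap (L ⊗[K] A) Bq)).comap
          (algebraMap A (L ⊗[K] A)) ≤ p :=
        le_trans (Ideal.comap_mono (aux_loc_comap_le q _)) (le_of_eq hpq)
      show ((J₁.asIdeal.comap (algebraMap (L ⊗[K] A) Bq)).comap
            (algebraMap A (L ⊗[K] A))).map (algebraMap A (Localization.AtPrime p))
          < ((J₂.asIdeal.comap (algebraMap (L ⊗[K] A) Bq)).comap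
            (algebraMap A (L ⊗[K] A))).map (algebraMap A (Localization.AtPrime p))
      refine lt_of_le_of_ne (Ideal.map_mono h2.le) fun heq => h2.ne ?_
      have e1 := (aux_loc_map_prime p _ (Ideal.comap_isPrime _ _) hle₁).2
      have e2 := (aux_loc_map_prime p _ (Ideal.comap_isPrime _ _) hle₂).2
      rw [← e1, ← e2, heq]
    · -- dim A_p ≤ dim B_q
      show Order.krullDim (PrimeSpectrum (Localization.AtPrime p))
        ≤ Order.krullDim (PrimeSpectrum Bq)
      have hdef : Order.krullDim (PrimeSpectrum (Localization.AtPrime p)) =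
          ⨆ (s : LTSeries (PrimeSpectrum (Localization.AtPrime p))),
            (s.length : WithBot (WithTop ℕ)) := rfl
      rw [hdef]
      refine iSup_le fun s => ?_
      -- map the chain down to Spec A
      let G : PrimeSpectrum (Localization.AtPrime p) → PrimeSpectrum A := fun J =>
        ⟨J.asIdeal.comap (algebraMap A (Localization.AtPrime p)), Ideal.comap_isPrime _ _⟩
      have hG : StrictMono G := by
        intro J₁ J₂ hJ
        have hJ' : J₁.asIdeal < J₂.asIdeal := hJ
        exact aux_loc_strictmono p hJ'
      let c : LTSeries (PrimeSpectrum A) := s.map G hG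
      have hclast : c.last = G s.last := rfl
      have hclastle : c.last.asIdeal ≤ p := aux_loc_comap_le p _
      -- lift the bottom of the chain below q using going-down
      obtain ⟨P, hPprime, hPle, hPcomap⟩ :=
        aux_going_down c.last.asIdeal p hclastle q hpq
      haveI := hPprime
      obtain ⟨c', hc'len, hc'last⟩ :=
        aux_lift_chain c.length c rfl ⟨P, hPprime⟩ hPcomap
      -- push c' into Spec of the localization at q
      have hc'le : ∀ i, (c' i).asIdeal ≤ q := by
        intro i
        have h1 : c' i ≤ c'.last := c'.monotone (Fin.le_last i)
        have h2 : (c' i).asIdeal ≤ (c'.last).asIdeal := h1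
        rw [hc'last] at h2
        exact le_trans h2 hPle
      have htprime : ∀ i, ((c' i).asIdeal.map (algebraMap (L ⊗[K] A) Bq)).IsPrime :=
        fun i => (aux_loc_map_prime q _ (c' i).isPrime (hc'le i)).1
      let t : LTSeries (PrimeSpectrum Bq) :=
        ⟨c'.length,
         fun i => ⟨(c' i).asIdeal.map (algebraMap (L ⊗[K] A) Bq), htprime i⟩,
         by
          intro i
          have hstep : c' i.castSucc < c' i.succ := c'.step i
          have hstep' : (c' i.castSucc).asIdeal < (c' i.succ).asIdeal := hstep
          show (c' i.castSucc).asIdeal.map (algebraMap (L ⊗[K] A) Bq)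
              < (c' i.succ).asIdeal.map (algebraMap (L ⊗[K] A) Bq)
          refine lt_of_le_of_ne (Ideal.map_mono hstep'.le) fun heq => hstep'.ne ?_
          have e1 := (aux_loc_map_prime q _ (c' i.castSucc).isPrime (hc'le i.castSucc)).2
          have e2 := (aux_loc_map_prime q _ (c' i.succ).isPrime (hc'le i.succ)).2
          rw [← e1, ← e2, heq]⟩
      have htlen : t.length = s.length := by
        have h1 : t.length = c'.length := rfl
        have h2 : c.length = s.length := rfl
        omega
      calc (s.length : WithBot ℕ∞) = (t.length : WithBot ℕ∞) := by
            rw [htlen]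
        _ ≤ Order.krullDim (PrimeSpectrum Bq) := Order.LTSeries.length_le_krullDim t
end
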